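/- arXiv:2306.01810 — 3 statements merged into one kernel-verified Lean document; each statement's English description precedes it below -/
import Mathlib

section
/- Let R and ω be real constants, let 𝓗(t) = R·[[−cosh(2ωt), i·sinh(2ωt)], [i·sinh(2ωt), cosh(2ωt)]] be the hyperbolic Hamiltonian, and let F₀ = −ω·σ_y where σ_y = [[0, −i], [i, 0]]. Then the hyperbolic brachistochrone (von Neumann) equation holds: for every real t, −(d/dt)𝓗(t) = 𝓗(t)·F₀ − F₀·𝓗(t) (the derivative taken entrywise), and moreover trace(𝓗(t)·F₀) = 0 for all t. -/
/-!
Write `𝓗(t) = cosh(2ωt)·A + sinh(2ωt)·B` with `A = −R σ_z` and `B = iR σ_x`. Differentiating in `t`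
swaps `cosh` and `sinh` (with a factor `2ω`), while taking the commutator with `σ_y` swaps `A` and
`B` (with a factor `2`), so `[𝓗, −ω σ_y] = −𝓗'`. The trace condition holds because `σ_z σ_y = −i σ_x`
and `σ_x σ_y = i σ_z` are traceless.
-/

/-- The hyperbolic Hamiltonian
`𝓗(t) = R·[[−cosh 2ωt, i sinh 2ωt],[i sinh 2ωt, cosh 2ωt]]`. -/
noncomputable def hypHam (R ω t : ℝ) : Matrix (Fin 2) (Fin 2) ℂ :=
  (R : ℂ) •
    !![-(Real.cosh (2 * ω * t) : ℂ), Complex.I * Real.sinh (2 * ω * t);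
       Complex.I * Real.sinh (2 * ω * t), (Real.cosh (2 * ω * t) : ℂ)]

/-- The Pauli matrix `σ_y = [[0, −i],[i, 0]]`. -/
noncomputable def sigmaY : Matrix (Fin 2) (Fin 2) ℂ :=
  !![0, -Complex.I; Complex.I, 0]

open Complex Matrix

theorem hasDerivAt_cosh_smul_add_sinh_smul {E : Type*} [NormedAddCommGroup E] [NormedSpace ℂ E]
    (a b : E) (c t : ℝ) :
    HasDerivAt (fun s : ℝ => (Real.cosh (c * s) : ℂ) • a + (Real.sinh (c * s) : ℂ) • b)
      ((c : ℂ) • ((Real.sinh (c * t) : ℂ) • a + (Real.cosh (c * t) : ℂ) • b)) t := by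
  have hlin : HasDerivAt (fun s : ℝ => c * s) c t := by
    simpa using (hasDerivAt_id t).const_mul c
  refine ((hlin.cosh.ofReal_comp).smul_const a).add ((hlin.sinh.ofReal_comp).smul_const b)
    |>.congr_deriv ?_
  push_cast
  module

noncomputable def hypHamCosh (R : ℝ) : Matrix (Fin 2) (Fin 2) ℂ := (R : ℂ) • !![-1, 0; 0, 1]

noncomputable def hypHamSinh (R : ℝ) : Matrix (Fin 2) (Fin 2) ℂ := (R : ℂ) • !![0, I; I, 0]

theorem hypHam_eq (R ω t : ℝ) :
    hypHam R ω t =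
      (Real.cosh (2 * ω * t) : ℂ) • hypHamCosh R + (Real.sinh (2 * ω * t) : ℂ) • hypHamSinh R := by
  ext i j
  fin_cases i <;> fin_cases j <;> simp [hypHam, hypHamCosh, hypHamSinh] <;> ring

theorem hypHamCosh_mul_sigmaY_sub (R : ℝ) :
    hypHamCosh R * sigmaY - sigmaY * hypHamCosh R = (2 : ℂ) • hypHamSinh R := by
  ext i j
  fin_cases i <;> fin_cases j <;> simp [hypHamCosh, hypHamSinh, sigmaY] <;> ring

theorem hypHamSinh_mul_sigmaY_sub (R : ℝ) :
    hypHamSinh R * sigmaY - sigmaY * hypHamSinh R = (2 : ℂ) • hypHamCosh R := by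
  ext i j
  fin_cases i <;> fin_cases j <;> simp [hypHamCosh, hypHamSinh, sigmaY] <;> ring_nf <;> simp [I_sq]

theorem hypHam_mul_sub_mul (R ω t : ℝ) :
    hypHam R ω t * (-(ω : ℂ) • sigmaY) - (-(ω : ℂ) • sigmaY) * hypHam R ω t =
      -(((2 * ω : ℝ) : ℂ) • ((Real.sinh (2 * ω * t) : ℂ) • hypHamCosh R +
        (Real.cosh (2 * ω * t) : ℂ) • hypHamSinh R)) := by
  rw [hypHam_eq]
  simp only [add_mul, mul_add, smul_mul_assoc, mul_smul_comm, smul_smul]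
  push_cast
  linear_combination (norm := module)
    (-(ω : ℂ) * Real.cosh (2 * ω * t)) • hypHamCosh_mul_sigmaY_sub R +
    (-(ω : ℂ) * Real.sinh (2 * ω * t)) • hypHamSinh_mul_sigmaY_sub R

theorem trace_hypHam_mul_sigmaY (R ω t : ℝ) : (hypHam R ω t * sigmaY).trace = 0 := by
  simp [hypHam, sigmaY, trace_fin_two]

/-- The hyperbolic brachistochrone (von Neumann) equation: with constraint
`F₀ = −ω·σ_y`, we have `−(d/dt)𝓗(t) = 𝓗(t)F₀ − F₀𝓗(t)` (entrywise derivative),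
and the trace condition `tr(𝓗(t)·F₀) = 0` holds for all `t`. -/
theorem hyperbolic_brachistochrone (R ω : ℝ) :
    (∀ (t : ℝ) (i j : Fin 2),
        HasDerivAt (fun s : ℝ => hypHam R ω s i j)
          (-((hypHam R ω t * (-(ω : ℂ) • sigmaY) - (-(ω : ℂ) • sigmaY) * hypHam R ω t) i j)) t)
    ∧ (∀ t : ℝ, (hypHam R ω t * (-(ω : ℂ) • sigmaY)).trace = 0) := by
  refine ⟨fun t i j => ?_, fun t => ?_⟩
  · rw [hypHam_mul_sub_mul, neg_apply, neg_neg]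
    simp_rw [hypHam_eq]
    simpa using
      hasDerivAt_cosh_smul_add_sinh_smul (hypHamCosh R i j) (hypHamSinh R i j) (2 * ω) t
  · rw [Matrix.mul_smul, trace_smul, trace_hypHam_mul_sigmaY, smul_zero]
end

section
/- Let k and c be real numbers, and let f : ℝ → ℂ be twice continuously differentiable on [0, ∞) with f(0) = 0 and f'(0) = 0, and suppose there are constants C ≥ 0 and a ∈ ℝ with |f(z)| ≤ C·e^{az}, |f'(z)| ≤ C·e^{az}, |f''(z)| ≤ C·e^{az} for all z ≥ 0. For p > a define the Laplace transform F(p) = ∫₀^∞ e^{−pz} f(z) dz. Then F is twice differentiable on (a, ∞) and for every p > a: ∫₀^∞ e^{−pz}·( (z² − 1)·f''(z) + 2(z − k)·f'(z) + c·f(z) ) dz = p²·F''(p) + 2p·F'(p) + (c − 2pk − p²)·F(p); i.e. the Laplace transform carries the transformed Legendre operator to the Whittaker-type operator. -/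
/-!
Two operational rules of the Laplace transform `L` do all the work: differentiation under the
integral sign gives `L(z·h) = -(L h)'`, and integration by parts gives `L(g') = p·L g` when
`g(0) = 0`. Applied to `f`, `f'`, `z²f` and `z²f'` (the last two vanish at `0` automatically),
they express every term of `L((z²−1)f'' + 2(z−k)f' + cf)` through `F`, `F'` and `F''`.
-/

open MeasureTheory Set Filter Topology Asymptotics

noncomputable def laplace (h : ℝ → ℂ) (p : ℝ) : ℂ :=
  ∫ z in Ioi (0 : ℝ), Complex.exp (-(p : ℂ) * z) * h z

lemma laplace_const_mul (c : ℂ) (h : ℝ → ℂ) (p : ℝ) :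
    laplace (fun z => c * h z) p = c * laplace h p := by
  simp only [laplace, mul_left_comm _ c, integral_const_mul]

/-- Asking for `O(e^{bz})` for every `b > a`, rather than for `b = a`, makes the class stable
under multiplication by `z`. -/
structure IsExpOrder (h : ℝ → ℂ) (a : ℝ) : Prop where
  continuousOn : ContinuousOn h (Ici 0)
  isBigO : ∀ b, a < b → h =O[atTop] fun z => Real.exp (b * z)

lemma Real.isBigO_exp_mul_exp_mul_of_le {a b : ℝ} (hab : a ≤ b) :
    (fun z : ℝ => Real.exp (a * z)) =O[atTop] fun z => Real.exp (b * z) := by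
  refine Real.isBigO_exp_comp_exp_comp.2 ⟨0, eventually_map.2 ?_⟩
  filter_upwards [eventually_ge_atTop 0] with z hz
  simpa [← sub_mul] using mul_nonpos_of_nonpos_of_nonneg (sub_nonpos.2 hab) hz

namespace IsExpOrder

variable {h u v : ℝ → ℂ} {a p : ℝ}

lemma of_norm_le {C : ℝ} (hc : ContinuousOn h (Ici 0))
    (hb : ∀ z, 0 ≤ z → ‖h z‖ ≤ C * Real.exp (a * z)) : IsExpOrder h a where
  continuousOn := hc
  isBigO b hab := by
    refine IsBigO.trans (.of_bound C ?_) (Real.isBigO_exp_mul_exp_mul_of_le hab.le)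
    filter_upwards [eventually_ge_atTop 0] with z hz
    simpa using hb z hz

lemma add (hu : IsExpOrder u a) (hv : IsExpOrder v a) : IsExpOrder (fun z => u z + v z) a :=
  ⟨hu.continuousOn.add hv.continuousOn, fun b hb => (hu.isBigO b hb).add (hv.isBigO b hb)⟩

lemma sub (hu : IsExpOrder u a) (hv : IsExpOrder v a) : IsExpOrder (fun z => u z - v z) a :=
  ⟨hu.continuousOn.sub hv.continuousOn, fun b hb => (hu.isBigO b hb).sub (hv.isBigO b hb)⟩

lemma const_mul (hh : IsExpOrder h a) (c : ℂ) : IsExpOrder (fun z => c * h z) a :=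
  ⟨continuousOn_const.mul hh.continuousOn, fun b hb => (hh.isBigO b hb).const_mul_left c⟩

lemma ofReal_mul (hh : IsExpOrder h a) : IsExpOrder (fun z => (z : ℂ) * h z) a := by
  refine ⟨Complex.continuous_ofReal.continuousOn.mul hh.continuousOn, fun b hb => ?_⟩
  have hid : (fun z : ℝ => (z : ℂ)) =O[atTop] fun z => Real.exp ((b - a) / 2 * z) :=
    Complex.isBigO_ofReal_left.2 <| by
      simpa using (isLittleO_pow_exp_pos_mul_atTop 1 (by linarith : 0 < (b - a) / 2)).isBigO
  refine (hid.mul (hh.isBigO ((a + b) / 2) (by linarith))).congr_right fun z => ?_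
  rw [← Real.exp_add]
  ring_nf

lemma isBigO_laplace_integrand (hh : IsExpOrder h a) {b : ℝ} (hb : a < b) :
    (fun z : ℝ => Complex.exp (-(p : ℂ) * z) * h z) =O[atTop]
      fun z => Real.exp (-(p - b) * z) := by
  have hexp : (fun z : ℝ => Complex.exp (-(p : ℂ) * z)) =O[atTop] fun z => Real.exp (-p * z) :=
    isBigO_of_le _ fun z => by simp [Complex.norm_exp]
  refine (hexp.mul (hh.isBigO b hb)).congr_right fun z => ?_
  rw [← Real.exp_add]
  ring_nf

lemma integrableOn (hh : IsExpOrder h a) (hp : a < p) :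
    IntegrableOn (fun z : ℝ => Complex.exp (-(p : ℂ) * z) * h z) (Ioi 0) := by
  have hc : ContinuousOn (fun z : ℝ => Complex.exp (-(p : ℂ) * z) * h z) (Ici 0) :=
    (Continuous.continuousOn (by fun_prop)).mul hh.continuousOn
  refine IntegrableOn.mono_set ?_ Ioi_subset_Ici_self
  exact (hc.locallyIntegrableOn measurableSet_Ici).integrableOn_of_isBigO_atTop
    (hh.isBigO_laplace_integrand (by linarith : a < (a + p) / 2))
    ⟨Ioi 0, Ioi_mem_atTop 0, exp_neg_integrableOn_Ioi 0 (by linarith)⟩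

lemma tendsto_laplace_integrand (hh : IsExpOrder h a) (hp : a < p) :
    Tendsto (fun z : ℝ => Complex.exp (-(p : ℂ) * z) * h z) atTop (𝓝 0) :=
  (hh.isBigO_laplace_integrand (by linarith : a < (a + p) / 2)).trans_tendsto <|
    Real.tendsto_exp_atBot.comp <| tendsto_id.const_mul_atTop_of_neg (by linarith)

lemma laplace_add (hu : IsExpOrder u a) (hv : IsExpOrder v a) (hp : a < p) :
    laplace (fun z => u z + v z) p = laplace u p + laplace v p := by
  simp only [laplace, mul_add]
  exact integral_add (hu.integrableOn hp) (hv.integrableOn hp)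

lemma laplace_sub (hu : IsExpOrder u a) (hv : IsExpOrder v a) (hp : a < p) :
    laplace (fun z => u z - v z) p = laplace u p - laplace v p := by
  simp only [laplace, mul_sub]
  exact integral_sub (hu.integrableOn hp) (hv.integrableOn hp)

lemma hasDerivAt_laplace (hh : IsExpOrder h a) (hp : a < p) :
    HasDerivAt (laplace h) (-laplace (fun z => (z : ℂ) * h z) p) p := by
  obtain ⟨r, har, hrp⟩ := exists_between hp
  have hball : Metric.ball p (p - r) ∈ 𝓝 p := Metric.ball_mem_nhds p (by linarith)
  have hr_lt : ∀ q ∈ Metric.ball p (p - r), r < q := fun q hq => by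
    rw [Metric.mem_ball, Real.dist_eq, abs_lt] at hq; linarith
  have hderiv : ∀ z q : ℝ, HasDerivAt (fun q : ℝ => Complex.exp (-(q : ℂ) * z) * h z)
      (-(Complex.exp (-(q : ℂ) * z) * ((z : ℂ) * h z))) q := fun z q => by
    have hlin : HasDerivAt (fun q : ℝ => -(q : ℂ) * z) (-(z : ℂ)) q := by
      simpa using (hasDerivAt_id q).ofReal_comp.neg.mul_const (z : ℂ)
    exact (hlin.cexp.mul_const (h z)).congr_deriv (by ring)
  have key := hasDerivAt_integral_of_dominated_loc_of_deriv_le (μ := volume.restrict (Ioi 0))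
    (bound := fun z : ℝ => ‖Complex.exp (-(r : ℂ) * z) * ((z : ℂ) * h z)‖) hball
    (eventually_of_mem hball fun q hq =>
      (hh.integrableOn (har.trans (hr_lt q hq))).aestronglyMeasurable)
    (hh.integrableOn hp) (hh.ofReal_mul.integrableOn hp).neg.aestronglyMeasurable ?_
    (hh.ofReal_mul.integrableOn har).norm (.of_forall fun z q _ => hderiv z q)
  · rw [integral_neg] at key
    exact key.2
  · filter_upwards [ae_restrict_mem measurableSet_Ioi] with z (hz : 0 < z) q hq
    simp only [norm_neg, norm_mul, Complex.norm_exp]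
    refine mul_le_mul_of_nonneg_right (Real.exp_le_exp.2 ?_) (by positivity)
    simpa using mul_le_mul_of_nonneg_right (hr_lt q hq).le hz.le

end IsExpOrder

section

variable {g g' : ℝ → ℂ} {a p : ℝ}

lemma laplace_eq_mul_laplace_of_hasDerivAt (hg : ∀ z, 0 ≤ z → HasDerivAt g (g' z) z)
    (hg0 : g 0 = 0) (Eg : IsExpOrder g a) (Eg' : IsExpOrder g' a) (hp : a < p) :
    laplace g' p = p * laplace g p := by
  have hw : ∀ z ∈ Ici (0 : ℝ), HasDerivAt (fun z : ℝ => Complex.exp (-(p : ℂ) * z) * g z)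
      (-(p : ℂ) * (Complex.exp (-(p : ℂ) * z) * g z) + Complex.exp (-(p : ℂ) * z) * g' z)
      z := by
    intro z hz
    have hlin : HasDerivAt (fun z : ℝ => -(p : ℂ) * z) (-(p : ℂ)) z := by
      simpa using ((hasDerivAt_id z).ofReal_comp.const_mul (-(p : ℂ)))
    exact (hlin.cexp.mul (hg z hz)).congr_deriv (by ring)
  have hibp := integral_Ioi_of_hasDerivAt_of_tendsto' hw
    ((Eg.integrableOn hp).const_mul _ |>.add (Eg'.integrableOn hp))
    (Eg.tendsto_laplace_integrand hp)
  rw [integral_add ((Eg.integrableOn hp).const_mul _) (Eg'.integrableOn hp),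
    integral_const_mul] at hibp
  simp only [hg0, mul_zero, sub_zero] at hibp
  unfold laplace
  linear_combination hibp

lemma laplace_ofReal_sq_mul_eq (hg : ∀ z, 0 ≤ z → HasDerivAt g (g' z) z)
    (Eg : IsExpOrder g a) (Eg' : IsExpOrder g' a) (hp : a < p) :
    laplace (fun z => (z : ℂ) * ((z : ℂ) * g' z)) p
      = p * laplace (fun z => (z : ℂ) * ((z : ℂ) * g z)) p
        - 2 * laplace (fun z => (z : ℂ) * g z) p := by
  have hid (z : ℝ) : HasDerivAt (fun z : ℝ => (z : ℂ)) 1 z := (hasDerivAt_id z).ofReal_comp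
  have hibp := laplace_eq_mul_laplace_of_hasDerivAt
    (g' := fun z => 2 * ((z : ℂ) * g z) + (z : ℂ) * ((z : ℂ) * g' z))
    (fun z hz => ((hid z).mul ((hid z).mul (hg z hz))).congr_deriv
      (by simp only [Pi.mul_apply]; ring))
    (by simp)
    Eg.ofReal_mul.ofReal_mul ((Eg.ofReal_mul.const_mul 2).add Eg'.ofReal_mul.ofReal_mul) hp
  rw [(Eg.ofReal_mul.const_mul 2).laplace_add Eg'.ofReal_mul.ofReal_mul hp,
    laplace_const_mul] at hibp
  linear_combination hibp

end

lemma laplace_legendre_operator (k c : ℝ) {f f' f'' : ℝ → ℂ} {a p : ℝ}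
    (hd1 : ∀ z, 0 ≤ z → HasDerivAt f (f' z) z)
    (hd2 : ∀ z, 0 ≤ z → HasDerivAt f' (f'' z) z)
    (h0 : f 0 = 0) (h0' : f' 0 = 0)
    (Ef : IsExpOrder f a) (Ef' : IsExpOrder f' a) (Ef'' : IsExpOrder f'' a) (hp : a < p) :
    laplace (fun z => ((z : ℂ) ^ 2 - 1) * f'' z + 2 * ((z : ℂ) - k) * f' z + (c : ℂ) * f z) p
      = p ^ 2 * laplace (fun z => (z : ℂ) * ((z : ℂ) * f z)) p
        - 2 * p * laplace (fun z => (z : ℂ) * f z) p + (c - 2 * p * k - p ^ 2) * laplace f p := by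
  have hsplit : (fun z : ℝ => ((z : ℂ) ^ 2 - 1) * f'' z + 2 * ((z : ℂ) - k) * f' z + c * f z)
      = fun z : ℝ => ((z : ℂ) * ((z : ℂ) * f'' z) - f'' z + 2 * ((z : ℂ) * f' z))
          + ((c : ℂ) * f z - (2 * k : ℂ) * f' z) := by
    ext z; ring
  have E1 := Ef''.ofReal_mul.ofReal_mul.sub Ef''
  have E2 := Ef'.ofReal_mul.const_mul 2
  have E3 := Ef.const_mul (c : ℂ)
  have E4 := Ef'.const_mul (2 * k : ℂ)
  rw [hsplit, (E1.add E2).laplace_add (E3.sub E4) hp, E1.laplace_add E2 hp,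
    Ef''.ofReal_mul.ofReal_mul.laplace_sub Ef'' hp, E3.laplace_sub E4 hp,
    laplace_const_mul, laplace_const_mul, laplace_const_mul]
  have e1 := laplace_eq_mul_laplace_of_hasDerivAt hd1 h0 Ef Ef' hp
  have e2 := laplace_eq_mul_laplace_of_hasDerivAt hd2 h0' Ef' Ef'' hp
  have e3 := laplace_ofReal_sq_mul_eq hd1 Ef Ef' hp
  have e4 := laplace_ofReal_sq_mul_eq hd2 Ef' Ef'' hp
  linear_combination e4 + (p : ℂ) * e3 - e2 - ((p : ℂ) + 2 * (k : ℂ)) * e1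

theorem laplace_transform_whittaker_general (k c a C : ℝ)
    (f f' f'' : ℝ → ℂ)
    (hd1 : ∀ z : ℝ, 0 ≤ z → HasDerivAt f (f' z) z)
    (hd2 : ∀ z : ℝ, 0 ≤ z → HasDerivAt f' (f'' z) z)
    (hcont : ContinuousOn f'' (Set.Ici 0))
    (h0 : f 0 = 0) (h0' : f' 0 = 0)
    (hgf : ∀ z : ℝ, 0 ≤ z → ‖f z‖ ≤ C * Real.exp (a * z))
    (hgf' : ∀ z : ℝ, 0 ≤ z → ‖f' z‖ ≤ C * Real.exp (a * z))
    (hgf'' : ∀ z : ℝ, 0 ≤ z → ‖f'' z‖ ≤ C * Real.exp (a * z))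
    (F : ℝ → ℂ)
    (hF : ∀ p : ℝ, a < p →
      F p = ∫ z in Set.Ioi (0 : ℝ), Complex.exp (-(p : ℂ) * z) * f z) :
    (∀ p : ℝ, a < p → DifferentiableAt ℝ F p ∧ DifferentiableAt ℝ (deriv F) p)
    ∧ ∀ p : ℝ, a < p →
        (∫ z in Set.Ioi (0 : ℝ), Complex.exp (-(p : ℂ) * z)
            * (((z : ℂ) ^ 2 - 1) * f'' z + 2 * ((z : ℂ) - k) * f' z + (c : ℂ) * f z))
          = (p : ℂ) ^ 2 * deriv (deriv F) p + 2 * (p : ℂ) * deriv F p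
            + ((c : ℂ) - 2 * (p : ℂ) * k - (p : ℂ) ^ 2) * F p := by
  have Ef : IsExpOrder f a :=
    .of_norm_le (fun z hz => (hd1 z hz).continuousAt.continuousWithinAt) hgf
  have Ef' : IsExpOrder f' a :=
    .of_norm_le (fun z hz => (hd2 z hz).continuousAt.continuousWithinAt) hgf'
  have Ef'' : IsExpOrder f'' a := .of_norm_le hcont hgf''
  have hF' : ∀ p, a < p → HasDerivAt F (-laplace (fun z => (z : ℂ) * f z) p) p := fun p hp =>
    (Ef.hasDerivAt_laplace hp).congr_of_eventuallyEq (eventually_of_mem (Ioi_mem_nhds hp) hF)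
  have hF'' : ∀ p, a < p →
      HasDerivAt (deriv F) (laplace (fun z => (z : ℂ) * ((z : ℂ) * f z)) p) p := fun p hp =>
    ((Ef.ofReal_mul.hasDerivAt_laplace hp).neg.congr_of_eventuallyEq
      (eventually_of_mem (Ioi_mem_nhds hp) fun q hq => (hF' q hq).deriv)).congr_deriv (neg_neg _)
  refine ⟨fun p hp => ⟨(hF' p hp).differentiableAt, (hF'' p hp).differentiableAt⟩,
    fun p hp => ?_⟩
  have hFp : F p = laplace f p := hF p hp
  rw [(hF'' p hp).deriv, (hF' p hp).deriv, hFp]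
  refine (laplace_legendre_operator k c hd1 hd2 h0 h0' Ef Ef' Ef'' hp).trans ?_
  ring

/-- The Laplace transform carries the transformed Legendre operator
`(z²−1)f'' + 2(z−k)f' + c·f` to the Whittaker-type operator
`p²F'' + 2pF' + (c − 2pk − p²)F`, for `f` of class C² on `[0,∞)` with
`f(0) = f'(0) = 0` and `f, f', f''` of exponential order `a`. -/
theorem laplace_transform_whittaker (k c a C : ℝ) (hC : 0 ≤ C)
    (f f' f'' : ℝ → ℂ)
    (hd1 : ∀ z : ℝ, 0 ≤ z → HasDerivAt f (f' z) z)
    (hd2 : ∀ z : ℝ, 0 ≤ z → HasDerivAt f' (f'' z) z)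
    (hcont : ContinuousOn f'' (Set.Ici 0))
    (h0 : f 0 = 0) (h0' : f' 0 = 0)
    (hgf : ∀ z : ℝ, 0 ≤ z → ‖f z‖ ≤ C * Real.exp (a * z))
    (hgf' : ∀ z : ℝ, 0 ≤ z → ‖f' z‖ ≤ C * Real.exp (a * z))
    (hgf'' : ∀ z : ℝ, 0 ≤ z → ‖f'' z‖ ≤ C * Real.exp (a * z))
    (F : ℝ → ℂ)
    (hF : ∀ p : ℝ, a < p →
      F p = ∫ z in Set.Ioi (0 : ℝ), Complex.exp (-(p : ℂ) * z) * f z) :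
    (∀ p : ℝ, a < p → DifferentiableAt ℝ F p ∧ DifferentiableAt ℝ (deriv F) p)
    ∧ ∀ p : ℝ, a < p →
        (∫ z in Set.Ioi (0 : ℝ), Complex.exp (-(p : ℂ) * z)
            * (((z : ℂ) ^ 2 - 1) * f'' z + 2 * ((z : ℂ) - k) * f' z + (c : ℂ) * f z))
          = (p : ℂ) ^ 2 * deriv (deriv F) p + 2 * (p : ℂ) * deriv F p
            + ((c : ℂ) - 2 * (p : ℂ) * k - (p : ℂ) ^ 2) * F p :=
  laplace_transform_whittaker_general k c a C f f' f'' hd1 hd2 hcont h0 h0' hgf hgf' hgf'' F hF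
end

section
/- Let k and c be real numbers, and let f : ℝ → ℂ be twice continuously differentiable on [0, ∞) with f(0) = 0 and f'(0) = 0, and suppose there are constants C ≥ 0 and a ∈ ℝ with |f(z)| ≤ C·e^{az}, |f'(z)| ≤ C·e^{az}, |f''(z)| ≤ C·e^{az} for all z ≥ 0. For p > a define the Laplace transform F(p) = ∫₀^∞ e^{−pz} f(z) dz. Then F is twice differentiable on (a, ∞) and for every p > a: ∫₀^∞ e^{−pz}·( (z² − 1)·f''(z) + 2(k + 1)·z·f'(z) + (c + k(k + 1))·f(z) ) dz = p²·F''(p) + (2 − 2k)·p·F'(p) + (k(k − 1) + c − p²)·F(p); i.e. the Laplace transform carries the power-conjugated Legendre operator to the modified Bessel (Macdonald)-type operator. -/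
/-!
Write `Mₙ g (p) = ∫₀^∞ zⁿ e^{-pz} g(z) dz`, so that `F = M₀ f`. Differentiating under the integral
sign gives `F' = -M₁ f` and `F'' = M₂ f`, and integrating by parts gives
`Mₙ g' = p Mₙ g - n Mₙ₋₁ g` whenever `zⁿ g(z)` vanishes at `z = 0`; the exponential-order bounds
make every integral converge and kill the boundary terms at infinity. The left-hand side is
`M₂ f'' - M₀ f'' + 2(k+1) M₁ f' + (c + k(k+1)) M₀ f`, and five instances of the
integration-by-parts rule turn it into the Bessel-type expression in `F, F', F''`.
-/

open MeasureTheory Set Filter Topology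
open scoped Complex

noncomputable def laplaceMoment (g : ℝ → ℂ) (n : ℕ) (p : ℝ) : ℂ :=
  ∫ z in Ioi (0 : ℝ), (z : ℂ) ^ n * cexp (-(p : ℂ) * z) * g z

theorem tendsto_pow_mul_exp_neg_mul_atTop_nhds_zero (n : ℕ) {b : ℝ} (hb : 0 < b) :
    Tendsto (fun z : ℝ => z ^ n * Real.exp (-b * z)) atTop (𝓝 0) :=
  (tendsto_rpow_mul_exp_neg_mul_atTop_nhds_zero n b hb).congr fun z => by rw [Real.rpow_natCast]

theorem integrableOn_pow_mul_exp_neg_mul (n : ℕ) {b : ℝ} (hb : 0 < b) :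
    IntegrableOn (fun z : ℝ => z ^ n * Real.exp (-b * z)) (Ioi 0) :=
  (integrableOn_rpow_mul_exp_neg_mul_rpow (s := n) (p := 1) (by linarith [n.cast_nonneg (α := ℝ)])
    one_pos hb).congr_fun (fun z _ => by simp only [Real.rpow_natCast, Real.rpow_one])
    measurableSet_Ioi

section ExponentialOrder

variable {g : ℝ → ℂ} {C a : ℝ}

theorem norm_pow_mul_cexp_mul_le {z : ℝ} (hz : 0 ≤ z) (hgz : ‖g z‖ ≤ C * Real.exp (a * z))
    (n : ℕ) {p b : ℝ} (hb : b ≤ p - a) :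
    ‖(z : ℂ) ^ n * cexp (-(p : ℂ) * z) * g z‖ ≤ C * (z ^ n * Real.exp (-b * z)) := by
  have hC : 0 ≤ C := nonneg_of_mul_nonneg_left ((norm_nonneg _).trans hgz) (Real.exp_pos _)
  have hexp : ‖cexp (-(p : ℂ) * z)‖ = Real.exp (-p * z) := by
    rw [Complex.norm_exp]; norm_num
  rw [norm_mul, norm_mul, norm_pow, Complex.norm_real, Real.norm_of_nonneg hz, hexp]
  calc z ^ n * Real.exp (-p * z) * ‖g z‖
      ≤ z ^ n * Real.exp (-p * z) * (C * Real.exp (a * z)) := by gcongr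
    _ = C * (z ^ n * Real.exp (-(p - a) * z)) := by
        rw [show -(p - a) * z = -p * z + a * z by ring, Real.exp_add]; ring
    _ ≤ C * (z ^ n * Real.exp (-b * z)) := by gcongr

variable (hg : ∀ z : ℝ, 0 ≤ z → ‖g z‖ ≤ C * Real.exp (a * z))
include hg

theorem integrableOn_pow_mul_cexp_mul (hgm : AEStronglyMeasurable g (volume.restrict (Ioi 0)))
    (n : ℕ) {p : ℝ} (hp : a < p) :
    IntegrableOn (fun z : ℝ => (z : ℂ) ^ n * cexp (-(p : ℂ) * z) * g z) (Ioi 0) := by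
  refine Integrable.mono' ((integrableOn_pow_mul_exp_neg_mul n (sub_pos.2 hp)).const_mul C)
    ((Continuous.aestronglyMeasurable (by fun_prop)).mul hgm) ?_
  filter_upwards [ae_restrict_mem measurableSet_Ioi] with z hz
  exact norm_pow_mul_cexp_mul_le (le_of_lt hz) (hg z (le_of_lt hz)) n le_rfl

theorem tendsto_pow_mul_cexp_mul_atTop (n : ℕ) {p : ℝ} (hp : a < p) :
    Tendsto (fun z : ℝ => (z : ℂ) ^ n * cexp (-(p : ℂ) * z) * g z) atTop (𝓝 0) := by
  have hbound := (tendsto_pow_mul_exp_neg_mul_atTop_nhds_zero n (sub_pos.2 hp)).const_mul C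
  rw [mul_zero] at hbound
  refine squeeze_zero_norm' ?_ hbound
  filter_upwards [eventually_ge_atTop 0] with z hz
  exact norm_pow_mul_cexp_mul_le hz (hg z hz) n le_rfl

theorem hasDerivAt_laplaceMoment (hgm : AEStronglyMeasurable g (volume.restrict (Ioi 0)))
    (n : ℕ) {p : ℝ} (hp : a < p) :
    HasDerivAt (laplaceMoment g n) (-laplaceMoment g (n + 1) p) p := by
  set ε := (p - a) / 2 with hε_def
  have hε : 0 < ε := half_pos (sub_pos.2 hp)
  have hderiv (z q : ℝ) : HasDerivAt (fun q : ℝ => (z : ℂ) ^ n * cexp (-(q : ℂ) * z) * g z)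
      (-((z : ℂ) ^ (n + 1) * cexp (-(q : ℂ) * z) * g z)) q := by
    have hexp := ((hasDerivAt_neg' (q : ℂ)).mul_const (z : ℂ)).cexp.comp_ofReal
    refine ((hexp.const_mul ((z : ℂ) ^ n)).mul_const (g z)).congr_deriv ?_
    ring
  have hbound : ∀ᵐ (z : ℝ) ∂volume.restrict (Ioi 0), ∀ q ∈ Metric.ball p ε,
      ‖-((z : ℂ) ^ (n + 1) * cexp (-(q : ℂ) * z) * g z)‖
        ≤ C * (z ^ (n + 1) * Real.exp (-ε * z)) := by
    filter_upwards [ae_restrict_mem measurableSet_Ioi] with z hz q hq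
    rw [Metric.mem_ball, Real.dist_eq, abs_lt] at hq
    rw [norm_neg]
    exact norm_pow_mul_cexp_mul_le (le_of_lt hz) (hg z (le_of_lt hz)) (n + 1) (by linarith [hε_def])
  have key := hasDerivAt_integral_of_dominated_loc_of_deriv_le
    (F := fun (q z : ℝ) => (z : ℂ) ^ n * cexp (-(q : ℂ) * z) * g z)
    (F' := fun (q z : ℝ) => -((z : ℂ) ^ (n + 1) * cexp (-(q : ℂ) * z) * g z))
    (Metric.ball_mem_nhds p hε)
    (Eventually.of_forall fun q => (Continuous.aestronglyMeasurable (by fun_prop)).mul hgm)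
    (integrableOn_pow_mul_cexp_mul hg hgm n hp)
    (integrableOn_pow_mul_cexp_mul hg hgm (n + 1) hp).aestronglyMeasurable.neg hbound
    ((integrableOn_pow_mul_exp_neg_mul (n + 1) hε).const_mul C)
    (ae_of_all _ fun z q _ => hderiv z q)
  rw [integral_neg] at key
  exact key.2

/-- The term `0 ^ n * g 0` is the boundary value at `z = 0`, present only for `n = 0`; in that case
the truncated `n - 1` is harmless, being multiplied by `n = 0`. -/
theorem laplaceMoment_of_hasDerivAt {g' : ℝ → ℂ} (hd : ∀ z : ℝ, 0 ≤ z → HasDerivAt g (g' z) z)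
    (hg' : ∀ z : ℝ, 0 ≤ z → ‖g' z‖ ≤ C * Real.exp (a * z))
    (hg'm : AEStronglyMeasurable g' (volume.restrict (Ioi 0))) (n : ℕ) {p : ℝ} (hp : a < p) :
    laplaceMoment g' n p
      = p * laplaceMoment g n p - n * laplaceMoment g (n - 1) p - 0 ^ n * g 0 := by
  have hgc : ContinuousOn g (Ici 0) := fun z hz => (hd z hz).continuousAt.continuousWithinAt
  have hgm := (hgc.mono Ioi_subset_Ici_self).aestronglyMeasurable (μ := volume) measurableSet_Ioi
  have hI (m : ℕ) := integrableOn_pow_mul_cexp_mul hg hgm m hp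
  have hderiv : ∀ z ∈ Ioi (0 : ℝ), HasDerivAt (fun z : ℝ => (z : ℂ) ^ n * cexp (-(p : ℂ) * z) * g z)
      (n * ((z : ℂ) ^ (n - 1) * cexp (-(p : ℂ) * z) * g z)
        + -p * ((z : ℂ) ^ n * cexp (-(p : ℂ) * z) * g z)
        + (z : ℂ) ^ n * cexp (-(p : ℂ) * z) * g' z) z := by
    intro z hz
    have hpow := (hasDerivAt_pow n (z : ℂ)).comp_ofReal
    have hexp := ((hasDerivAt_id' (z : ℂ)).const_mul (-(p : ℂ))).cexp.comp_ofReal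
    refine ((hpow.mul hexp).mul (hd z (le_of_lt hz))).congr_deriv ?_
    simp only [Pi.mul_apply]
    ring
  have hcont :
      ContinuousWithinAt (fun z : ℝ => (z : ℂ) ^ n * cexp (-(p : ℂ) * z) * g z) (Ici 0) 0 :=
    (Continuous.continuousWithinAt (by fun_prop)).mul (hgc 0 self_mem_Ici)
  have hI' := integrableOn_pow_mul_cexp_mul hg' hg'm n hp
  have key := integral_Ioi_of_hasDerivAt_of_tendsto hcont hderiv
    ((((hI (n - 1)).const_mul (n : ℂ)).add ((hI n).const_mul (-(p : ℂ)))).add hI')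
    (tendsto_pow_mul_cexp_mul_atTop hg n hp)
  rw [integral_add, integral_add, integral_const_mul, integral_const_mul] at key
  rotate_left
  · exact (hI (n - 1)).const_mul _
  · exact (hI n).const_mul _
  · exact ((hI (n - 1)).const_mul _).add ((hI n).const_mul _)
  · exact hI'
  simp only [Complex.ofReal_zero, mul_zero, Complex.exp_zero, mul_one] at key
  unfold laplaceMoment
  linear_combination key

end ExponentialOrder

theorem integral_cexp_mul_legendre_eq (k c p : ℝ) {f f' f'' : ℝ → ℂ}
    (h2 : IntegrableOn (fun z : ℝ => (z : ℂ) ^ 2 * cexp (-(p : ℂ) * z) * f'' z) (Ioi 0))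
    (h0 : IntegrableOn (fun z : ℝ => (z : ℂ) ^ 0 * cexp (-(p : ℂ) * z) * f'' z) (Ioi 0))
    (h1' : IntegrableOn (fun z : ℝ => (z : ℂ) ^ 1 * cexp (-(p : ℂ) * z) * f' z) (Ioi 0))
    (h0' : IntegrableOn (fun z : ℝ => (z : ℂ) ^ 0 * cexp (-(p : ℂ) * z) * f z) (Ioi 0)) :
    ∫ z in Ioi (0 : ℝ), cexp (-(p : ℂ) * z)
        * (((z : ℂ) ^ 2 - 1) * f'' z + 2 * ((k : ℂ) + 1) * (z : ℂ) * f' z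
          + ((c : ℂ) + (k : ℂ) * ((k : ℂ) + 1)) * f z)
      = laplaceMoment f'' 2 p - laplaceMoment f'' 0 p + 2 * ((k : ℂ) + 1) * laplaceMoment f' 1 p
        + ((c : ℂ) + (k : ℂ) * ((k : ℂ) + 1)) * laplaceMoment f 0 p := by
  have hsplit : (fun z : ℝ => cexp (-(p : ℂ) * z)
        * (((z : ℂ) ^ 2 - 1) * f'' z + 2 * ((k : ℂ) + 1) * (z : ℂ) * f' z
          + ((c : ℂ) + (k : ℂ) * ((k : ℂ) + 1)) * f z))
      = fun z : ℝ => ((z : ℂ) ^ 2 * cexp (-(p : ℂ) * z) * f'' z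
            - (z : ℂ) ^ 0 * cexp (-(p : ℂ) * z) * f'' z)
          + 2 * ((k : ℂ) + 1) * ((z : ℂ) ^ 1 * cexp (-(p : ℂ) * z) * f' z)
          + ((c : ℂ) + (k : ℂ) * ((k : ℂ) + 1)) * ((z : ℂ) ^ 0 * cexp (-(p : ℂ) * z) * f z) := by
    ext z; ring
  rw [hsplit, integral_add, integral_add, integral_sub h2 h0, integral_const_mul,
    integral_const_mul]
  · rfl
  · exact h2.sub h0
  · exact h1'.const_mul _
  · exact (h2.sub h0).add (h1'.const_mul _)
  · exact h0'.const_mul _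

theorem laplace_transform_macdonald_general (k c a C : ℝ)
    (f f' f'' : ℝ → ℂ)
    (hd1 : ∀ z : ℝ, 0 ≤ z → HasDerivAt f (f' z) z)
    (hd2 : ∀ z : ℝ, 0 ≤ z → HasDerivAt f' (f'' z) z)
    (hcont : ContinuousOn f'' (Set.Ici 0))
    (h0 : f 0 = 0) (h0' : f' 0 = 0)
    (hgf : ∀ z : ℝ, 0 ≤ z → ‖f z‖ ≤ C * Real.exp (a * z))
    (hgf' : ∀ z : ℝ, 0 ≤ z → ‖f' z‖ ≤ C * Real.exp (a * z))
    (hgf'' : ∀ z : ℝ, 0 ≤ z → ‖f'' z‖ ≤ C * Real.exp (a * z))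
    (F : ℝ → ℂ)
    (hF : ∀ p : ℝ, a < p →
      F p = ∫ z in Set.Ioi (0 : ℝ), Complex.exp (-(p : ℂ) * z) * f z) :
    (∀ p : ℝ, a < p → DifferentiableAt ℝ F p ∧ DifferentiableAt ℝ (deriv F) p)
    ∧ ∀ p : ℝ, a < p →
        (∫ z in Set.Ioi (0 : ℝ), Complex.exp (-(p : ℂ) * z)
            * (((z : ℂ) ^ 2 - 1) * f'' z + 2 * ((k : ℂ) + 1) * (z : ℂ) * f' z
              + ((c : ℂ) + (k : ℂ) * ((k : ℂ) + 1)) * f z))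
          = (p : ℂ) ^ 2 * deriv (deriv F) p + (2 - 2 * (k : ℂ)) * (p : ℂ) * deriv F p
            + ((k : ℂ) * ((k : ℂ) - 1) + (c : ℂ) - (p : ℂ) ^ 2) * F p := by
  have hfm := ContinuousOn.aestronglyMeasurable (μ := volume)
    (fun z hz => (hd1 z (le_of_lt hz)).continuousAt.continuousWithinAt) measurableSet_Ioi
  have hf'm := ContinuousOn.aestronglyMeasurable (μ := volume)
    (fun z hz => (hd2 z (le_of_lt hz)).continuousAt.continuousWithinAt) measurableSet_Ioi
  have hf''m :=
    (hcont.mono Ioi_subset_Ici_self).aestronglyMeasurable (μ := volume) measurableSet_Ioi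
  have hFM : EqOn F (laplaceMoment f 0) (Ioi a) := fun p hp => by
    simp only [hF p hp, laplaceMoment, pow_zero, one_mul]
  have hF1 (p : ℝ) (hp : a < p) : HasDerivAt F (-laplaceMoment f 1 p) p :=
    (hasDerivAt_laplaceMoment hgf hfm 0 hp).congr_of_eventuallyEq
      (hFM.eventuallyEq_of_mem (Ioi_mem_nhds hp))
  have hF2 (p : ℝ) (hp : a < p) : HasDerivAt (deriv F) (laplaceMoment f 2 p) p := by
    simpa using (hasDerivAt_laplaceMoment hgf hfm 1 hp).neg.congr_of_eventuallyEq
      (eventually_of_mem (Ioi_mem_nhds hp) fun q hq => (hF1 q hq).deriv)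
  refine ⟨fun p hp => ⟨(hF1 p hp).differentiableAt, (hF2 p hp).differentiableAt⟩, fun p hp => ?_⟩
  rw [integral_cexp_mul_legendre_eq k c p (integrableOn_pow_mul_cexp_mul hgf'' hf''m 2 hp)
      (integrableOn_pow_mul_cexp_mul hgf'' hf''m 0 hp)
      (integrableOn_pow_mul_cexp_mul hgf' hf'm 1 hp)
      (integrableOn_pow_mul_cexp_mul hgf hfm 0 hp), (hF2 p hp).deriv, (hF1 p hp).deriv, hFM hp]
  have hM'0 := laplaceMoment_of_hasDerivAt hgf hd1 hgf' hf'm 0 hp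
  have hM'1 := laplaceMoment_of_hasDerivAt hgf hd1 hgf' hf'm 1 hp
  have hM'2 := laplaceMoment_of_hasDerivAt hgf hd1 hgf' hf'm 2 hp
  have hM''0 := laplaceMoment_of_hasDerivAt hgf' hd2 hgf'' hf''m 0 hp
  have hM''2 := laplaceMoment_of_hasDerivAt hgf' hd2 hgf'' hf''m 2 hp
  simp only [h0, h0', pow_zero, mul_zero, ne_eq, OfNat.ofNat_ne_zero, one_ne_zero,
    not_false_eq_true, zero_pow, sub_zero] at hM'0 hM'1 hM'2 hM''0 hM''2
  linear_combination hM''2 - hM''0 + (p : ℂ) * hM'2 + 2 * (k : ℂ) * hM'1 - (p : ℂ) * hM'0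

/-- The Laplace transform carries the power-conjugated Legendre operator
`(z²−1)f'' + 2(k+1)z f' + (c + k(k+1))·f` to the modified Bessel (Macdonald)-type
operator `p²F'' + (2−2k)pF' + (k(k−1) + c − p²)F`, for `f` of class C² on `[0,∞)`
with `f(0) = f'(0) = 0` and `f, f', f''` of exponential order `a`. -/
theorem laplace_transform_macdonald (k c a C : ℝ) (hC : 0 ≤ C)
    (f f' f'' : ℝ → ℂ)
    (hd1 : ∀ z : ℝ, 0 ≤ z → HasDerivAt f (f' z) z)
    (hd2 : ∀ z : ℝ, 0 ≤ z → HasDerivAt f' (f'' z) z)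
    (hcont : ContinuousOn f'' (Set.Ici 0))
    (h0 : f 0 = 0) (h0' : f' 0 = 0)
    (hgf : ∀ z : ℝ, 0 ≤ z → ‖f z‖ ≤ C * Real.exp (a * z))
    (hgf' : ∀ z : ℝ, 0 ≤ z → ‖f' z‖ ≤ C * Real.exp (a * z))
    (hgf'' : ∀ z : ℝ, 0 ≤ z → ‖f'' z‖ ≤ C * Real.exp (a * z))
    (F : ℝ → ℂ)
    (hF : ∀ p : ℝ, a < p →
      F p = ∫ z in Set.Ioi (0 : ℝ), Complex.exp (-(p : ℂ) * z) * f z) :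
    (∀ p : ℝ, a < p → DifferentiableAt ℝ F p ∧ DifferentiableAt ℝ (deriv F) p)
    ∧ ∀ p : ℝ, a < p →
        (∫ z in Set.Ioi (0 : ℝ), Complex.exp (-(p : ℂ) * z)
            * (((z : ℂ) ^ 2 - 1) * f'' z + 2 * ((k : ℂ) + 1) * (z : ℂ) * f' z
              + ((c : ℂ) + (k : ℂ) * ((k : ℂ) + 1)) * f z))
          = (p : ℂ) ^ 2 * deriv (deriv F) p + (2 - 2 * (k : ℂ)) * (p : ℂ) * deriv F p
            + ((k : ℂ) * ((k : ℂ) - 1) + (c : ℂ) - (p : ℂ) ^ 2) * F p :=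
  laplace_transform_macdonald_general k c a C f f' f'' hd1 hd2 hcont h0 h0' hgf hgf' hgf'' F hF
end
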